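/- Jacobi polynomials normalized at 1 converge to the normalized Bessel function: for fixed α, β > -1 and fixed real x, lim_{n→∞} P_n^{(α,β)}(cos(x/n)) / P_n^{(α,β)}(1) = 𝒥_α(x), where P_n^{(α,β)} is the Jacobi polynomial and 𝒥_α(x) = Σ_{k=0}^{∞} (-x²/4)^k / ((α+1)_k k!). -/

import Mathlib

open Filter

/-- Pochhammer symbol `(a)_k = a (a+1) ⋯ (a+k-1)`. -/
noncomputable def poch (a : ℝ) (k : ℕ) : ℝ := ∏ i ∈ Finset.range k, (a + i)

/-- Jacobi polynomial
`P_n^{(α,β)}(y) = ((α+1)_n/n!) ₂F₁(-n, n+α+β+1; α+1; (1-y)/2)`. -/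
noncomputable def jacobiP (n : ℕ) (α β : ℝ) (y : ℝ) : ℝ :=
  poch (α + 1) n / Nat.factorial n *
    ∑ k ∈ Finset.range (n + 1),
      poch (-(n : ℝ)) k * poch ((n : ℝ) + α + β + 1) k /
        (poch (α + 1) k * Nat.factorial k) * ((1 - y) / 2) ^ k

/-- Normalized Bessel function `𝒥_α(x) = ∑ (-x²/4)^k / ((α+1)_k k!)`. -/
noncomputable def normBessel (α : ℝ) (x : ℝ) : ℝ :=
  ∑' k : ℕ, (-(x ^ 2) / 4) ^ k / (poch (α + 1) k * Nat.factorial k)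

/-! The ratio `P_n^{(α,β)}(cos (x/n)) / P_n^{(α,β)}(1)` is the terminating series
`₂F₁(-n, n + γ; α + 1; tₙ)` with `γ = α + β + 1` and `tₙ = (1 - cos (x/n)) / 2`, and
`n² tₙ → x²/4`. Its `k`-th term is `∏_{i<k} (i - n)(n + γ + i) tₙ / ((α+1)_k k!)`: each factor
tends to `-x²/4` and, for `k ≤ n`, is bounded by `(2 + |γ|) n² tₙ`, while the terms with `k > n`
vanish. So the terms are dominated by `C Mᵏ / k!`, and dominated convergence for series
(Tannery's theorem) gives the limit. -/

open Filter Topology Finset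

noncomputable def hypergeomTerm (a b c t : ℝ) (k : ℕ) : ℝ :=
  poch a k * poch b k / (poch c k * k.factorial) * t ^ k

lemma poch_pos {a : ℝ} (ha : 0 < a) (k : ℕ) : 0 < poch a k :=
  prod_pos fun i _ => by positivity

lemma poch_neg_natCast_of_lt {n k : ℕ} (h : n < k) : poch (-(n : ℝ)) k = 0 :=
  prod_eq_zero (mem_range.2 h) (by simp)

lemma poch_succ_left (a : ℝ) (k : ℕ) : poch a (k + 1) = a * poch (a + 1) k := by
  simp only [poch, prod_range_succ', Nat.cast_add, Nat.cast_one, Nat.cast_zero, add_zero]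
  rw [mul_comm]
  congr 1
  exact prod_congr rfl fun i _ => by ring

lemma one_le_poch {a : ℝ} (ha : 1 ≤ a) (k : ℕ) : 1 ≤ poch a k :=
  one_le_prod fun i _ => by have := i.cast_nonneg (α := ℝ); linarith

lemma min_one_le_poch {a : ℝ} (ha : 0 < a) : ∀ k : ℕ, min 1 a ≤ poch a k
  | 0 => by simp [poch]
  | k + 1 => by
    rw [poch_succ_left]
    calc min 1 a ≤ a := min_le_right _ _
      _ ≤ a * poch (a + 1) k := le_mul_of_one_le_right ha.le (one_le_poch (by linarith) k)

lemma hypergeomTerm_eq_prod (a b c t : ℝ) (k : ℕ) :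
    hypergeomTerm a b c t k =
      (∏ i ∈ range k, (a + i) * (b + i) * t) / (poch c k * k.factorial) := by
  rw [hypergeomTerm, div_mul_eq_mul_div, prod_mul_distrib, prod_mul_distrib, prod_const,
    card_range, poch, poch]

lemma hypergeomTerm_neg_natCast_of_lt {n k : ℕ} (h : n < k) (b c t : ℝ) :
    hypergeomTerm (-n) b c t k = 0 := by
  rw [hypergeomTerm, poch_neg_natCast_of_lt h]
  ring

lemma abs_hypergeomTerm_le {a b c t M : ℝ} (hc : 0 < c) {k : ℕ}
    (h : ∀ i < k, |(a + i) * (b + i) * t| ≤ M) :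
    |hypergeomTerm a b c t k| ≤ M ^ k / (min 1 c * k.factorial) := by
  have hnum : |∏ i ∈ range k, (a + i) * (b + i) * t| ≤ M ^ k :=
    calc |∏ i ∈ range k, (a + i) * (b + i) * t|
        ≤ ∏ _i ∈ range k, M := by
          rw [abs_prod]
          exact prod_le_prod (fun _ _ => abs_nonneg _) fun i hi => h i (mem_range.1 hi)
      _ = M ^ k := by rw [prod_const, card_range]
  have hk : (0 : ℝ) < k.factorial := by positivity
  rw [hypergeomTerm_eq_prod, abs_div, abs_of_pos (mul_pos (poch_pos hc k) hk)]
  exact div_le_div₀ ((abs_nonneg _).trans hnum) hnum (by positivity)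
    (mul_le_mul_of_nonneg_right (min_one_le_poch hc k) hk.le)

lemma tendsto_hypergeomTerm {t : ℕ → ℝ} {L : ℝ}
    (ht : Tendsto (fun n : ℕ => (n : ℝ) ^ 2 * t n) atTop (𝓝 L)) (γ c : ℝ) (k : ℕ) :
    Tendsto (fun n : ℕ => hypergeomTerm (-n) (n + γ) c (t n) k) atTop
      (𝓝 ((-L) ^ k / (poch c k * k.factorial))) := by
  simp_rw [hypergeomTerm_eq_prod]
  refine Tendsto.div_const ?_ _
  suffices hprod : Tendsto (fun n : ℕ => ∏ i ∈ range k, (-(n : ℝ) + i) * (n + γ + i) * t n)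
      atTop (𝓝 (∏ _i ∈ range k, -L)) by rwa [prod_const, card_range] at hprod
  refine tendsto_finsetProd _ fun i _ => ?_
  have hfactor : Tendsto (fun n : ℕ => ((i : ℝ) / n - 1) * (1 + (γ + i) / n) * (n ^ 2 * t n))
      atTop (𝓝 ((0 - 1) * (1 + 0) * L)) :=
    (((tendsto_const_div_atTop_nhds_zero_nat _).sub_const 1).mul
      (tendsto_const_nhds.add (tendsto_const_div_atTop_nhds_zero_nat _))).mul ht
  rw [show (0 - 1) * (1 + 0) * L = -L by ring] at hfactor
  refine hfactor.congr' ?_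
  filter_upwards [eventually_ne_atTop 0] with n hn
  field_simp
  ring

lemma abs_hypergeomTerm_neg_natCast_le {n : ℕ} (hn : 1 ≤ n) {γ c t B : ℝ} (hc : 0 < c)
    (ht : |(n : ℝ) ^ 2 * t| ≤ B) (k : ℕ) :
    |hypergeomTerm (-n) (n + γ) c t k| ≤ ((2 + |γ|) * B) ^ k / (min 1 c * k.factorial) := by
  rcases lt_or_ge n k with hnk | hkn
  · rw [hypergeomTerm_neg_natCast_of_lt hnk, abs_zero]
    have := poch_pos hc k
    positivity [(abs_nonneg _).trans ht]
  refine abs_hypergeomTerm_le hc fun i hi => ?_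
  have hn1 : (1 : ℝ) ≤ n := by exact_mod_cast hn
  have hin : (i : ℝ) ≤ n := by exact_mod_cast (hi.trans_le hkn).le
  have hi0 : (0 : ℝ) ≤ i := i.cast_nonneg
  have h1 : |-(n : ℝ) + i| ≤ n := abs_le.2 ⟨by linarith, by linarith⟩
  have hγ : |γ| ≤ |γ| * n := le_mul_of_one_le_right (abs_nonneg γ) hn1
  have h2 : |(n : ℝ) + γ + i| ≤ (2 + |γ|) * n :=
    abs_le.2 ⟨by linarith [neg_abs_le γ], by linarith [le_abs_self γ]⟩
  calc |(-(n : ℝ) + i) * (n + γ + i) * t| = |-(n : ℝ) + i| * |(n : ℝ) + γ + i| * |t| := by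
        rw [abs_mul, abs_mul]
    _ ≤ n * ((2 + |γ|) * n) * |t| := by gcongr
    _ = (2 + |γ|) * |(n : ℝ) ^ 2 * t| := by
        rw [abs_mul, abs_of_nonneg (by positivity : (0 : ℝ) ≤ n ^ 2)]; ring
    _ ≤ (2 + |γ|) * B := by gcongr

theorem tendsto_tsum_hypergeomTerm {t : ℕ → ℝ} {L : ℝ}
    (ht : Tendsto (fun n : ℕ => (n : ℝ) ^ 2 * t n) atTop (𝓝 L)) (γ : ℝ) {c : ℝ} (hc : 0 < c) :
    Tendsto (fun n : ℕ => ∑' k, hypergeomTerm (-n) (n + γ) c (t n) k) atTop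
      (𝓝 (∑' k, (-L) ^ k / (poch c k * k.factorial))) := by
  have hB : ∀ᶠ n : ℕ in atTop, |(n : ℝ) ^ 2 * t n| ≤ |L| + 1 :=
    ht.abs.eventually (ge_mem_nhds (lt_add_one _))
  have hsum : Summable fun k : ℕ => ((2 + |γ|) * (|L| + 1)) ^ k / (min 1 c * k.factorial) :=
    ((Real.summable_pow_div_factorial _).div_const (min 1 c)).congr fun k => by
      rw [div_div, mul_comm (k.factorial : ℝ)]
  refine tendsto_tsum_of_dominated_convergence hsum (tendsto_hypergeomTerm ht γ c) ?_
  filter_upwards [eventually_ge_atTop 1, hB] with n hn hBn k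
  exact abs_hypergeomTerm_neg_natCast_le hn hc hBn k

lemma jacobiP_one (n : ℕ) (α β : ℝ) : jacobiP n α β 1 = poch (α + 1) n / n.factorial := by
  rw [jacobiP, sum_eq_single 0 (fun k _ hk => by simp [zero_pow hk]) (by simp)]
  simp [poch]

lemma jacobiP_div_jacobiP_one {α : ℝ} (hα : -1 < α) (β y : ℝ) (n : ℕ) :
    jacobiP n α β y / jacobiP n α β 1 =
      ∑' k, hypergeomTerm (-n) (n + (α + β + 1)) (α + 1) ((1 - y) / 2) k := by
  have hlead : poch (α + 1) n / n.factorial ≠ 0 :=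
    (div_pos (poch_pos (by linarith) n) (by positivity)).ne'
  rw [jacobiP_one, jacobiP, mul_div_cancel_left₀ _ hlead,
    tsum_eq_sum (s := range (n + 1)) fun k hk =>
      hypergeomTerm_neg_natCast_of_lt (by simp at hk; omega) _ _ _]
  simp only [hypergeomTerm, add_assoc]

lemma tendsto_natCast_sq_mul_one_sub_cos_div (x : ℝ) :
    Tendsto (fun n : ℕ => (n : ℝ) ^ 2 * ((1 - Real.cos (x / n)) / 2)) atTop (𝓝 (x ^ 2 / 4)) := by
  have hsinc : Tendsto (fun n : ℕ => Real.sinc (x / 2 / n)) atTop (𝓝 1) := by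
    rw [← Real.sinc_zero]
    exact (Real.continuous_sinc.tendsto 0).comp (tendsto_const_div_atTop_nhds_zero_nat (x / 2))
  have hlim := (hsinc.pow 2).const_mul ((x / 2) ^ 2)
  rw [one_pow, mul_one, div_pow, show (2 : ℝ) ^ 2 = 4 by norm_num] at hlim
  refine hlim.congr' ?_
  filter_upwards [eventually_ne_atTop 0] with n hn
  have hhalf : (1 - Real.cos (x / n)) / 2 = Real.sin (x / 2 / n) ^ 2 := by
    have := Real.cos_sq (x / 2 / n)
    rw [show 2 * (x / 2 / n) = x / n by ring] at this
    linarith [Real.sin_sq_add_cos_sq (x / 2 / n)]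
  rcases eq_or_ne x 0 with rfl | hx
  · simp
  rw [hhalf, Real.sinc_of_ne_zero (by positivity)]
  field_simp
  ring

theorem jacobi_to_bessel_limit_general (α β : ℝ) (hα : -1 < α) (x : ℝ) :
    Tendsto (fun n : ℕ => jacobiP n α β (Real.cos (x / n)) / jacobiP n α β 1)
      atTop (nhds (normBessel α x)) := by
  simp_rw [jacobiP_div_jacobiP_one hα]
  have hlim := tendsto_tsum_hypergeomTerm (tendsto_natCast_sq_mul_one_sub_cos_div x)
    (α + β + 1) (by linarith : 0 < α + 1)
  simpa only [normBessel, neg_div] using hlim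

theorem jacobi_to_bessel_limit (α β : ℝ) (hα : -1 < α) (hβ : -1 < β) (x : ℝ) :
    Tendsto (fun n : ℕ => jacobiP n α β (Real.cos (x / n)) / jacobiP n α β 1)
      atTop (nhds (normBessel α x)) :=
  jacobi_to_bessel_limit_general α β hα x
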